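/- Maximal value of the sparse objective: for v ∈ ℝ^p and λ ≥ 0 with S_λ(v) ≠ 0, the value max_{‖β‖₂=1} (⟨β, v⟩ − λ‖β‖₁) equals ‖S_λ(v)‖₂, where S_λ is the coordinate-wise soft-thresholding operator. -/

import Mathlib

/-!
Coordinatewise, `b * x - λ |b| ≤ |b| |S_λ(x)|` for `λ ≥ 0`, with equality at `b = S_λ(x)`, where
both sides equal `S_λ(x)²`. Summing and applying Cauchy–Schwarz to `(|β j|)` and `(|w j|)`
bounds the objective by `‖β‖ ‖w‖`; the objective is positively homogeneous and equals `‖w‖²`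
at `w`, so the bound `‖w‖` is attained at `w / ‖w‖`.
-/

open scoped RealInnerProductSpace

/-- Soft-thresholding (shrinkage) operator `S_λ(x) = sign(x)(|x| − λ) 1{|x| > λ}`. -/
noncomputable def softThresh (lam x : ℝ) : ℝ :=
  Real.sign x * (|x| - lam) * (if lam < |x| then 1 else 0)

lemma abs_softThresh {lam : ℝ} (hlam : 0 ≤ lam) (x : ℝ) :
    |softThresh lam x| = max (|x| - lam) 0 := by
  unfold softThresh
  split_ifs with h
  · have hx : x ≠ 0 := by rintro rfl; simp at h; linarith
    have hsign : |Real.sign x| = 1 := by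
      rcases Real.sign_apply_eq_of_ne_zero x hx with h' | h' <;> simp [h']
    rw [mul_one, abs_mul, hsign, one_mul, abs_of_pos (sub_pos.2 h), max_eq_left (sub_pos.2 h).le]
  · simp [not_lt.1 h]

lemma softThresh_mul_self_nonneg (lam x : ℝ) : 0 ≤ softThresh lam x * x := by
  have hfactor : 0 ≤ (|x| - lam) * (if lam < |x| then 1 else 0 : ℝ) := by
    split_ifs with h <;> linarith
  calc (0 : ℝ) ≤ (Real.sign x * x) * ((|x| - lam) * (if lam < |x| then 1 else 0)) :=
        mul_nonneg (Real.sign_mul_nonneg x) hfactor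
    _ = softThresh lam x * x := by unfold softThresh; ring

lemma softThresh_mul_self_sub {lam : ℝ} (hlam : 0 ≤ lam) (x : ℝ) :
    softThresh lam x * x - lam * |softThresh lam x| = softThresh lam x ^ 2 := by
  have hprod : softThresh lam x * x = |softThresh lam x| * |x| := by
    rw [← abs_mul, abs_of_nonneg (softThresh_mul_self_nonneg lam x)]
  rw [hprod, ← sq_abs]
  rcases max_choice (|x| - lam) 0 with h | h <;> rw [← abs_softThresh hlam] at h <;> rw [h] <;> ring

lemma mul_sub_mul_abs_le_abs_mul_abs_softThresh {lam : ℝ} (hlam : 0 ≤ lam) (b x : ℝ) :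
    b * x - lam * |b| ≤ |b| * |softThresh lam x| := by
  have hbx : b * x ≤ |b| * |x| := (le_abs_self _).trans_eq (abs_mul b x)
  rw [abs_softThresh hlam]
  calc b * x - lam * |b| ≤ |b| * (|x| - lam) := by linarith
    _ ≤ |b| * max (|x| - lam) 0 := mul_le_mul_of_nonneg_left (le_max_left _ _) (abs_nonneg b)

namespace EuclideanSpace

variable {ι : Type*} [Fintype ι]

lemma sum_abs_mul_abs_le_norm_mul_norm (x y : EuclideanSpace ℝ ι) :
    ∑ i, |x i| * |y i| ≤ ‖x‖ * ‖y‖ := by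
  simpa only [norm_eq, Real.norm_eq_abs] using Real.sum_mul_le_sqrt_mul_sqrt Finset.univ _ _

end EuclideanSpace

noncomputable def sparseObjective {ι : Type*} [Fintype ι] (lam : ℝ) (v β : EuclideanSpace ℝ ι) : ℝ :=
  ⟪β, v⟫ - lam * ∑ j, |β j|

namespace sparseObjective

variable {ι : Type*} [Fintype ι] {lam : ℝ} {v w : EuclideanSpace ℝ ι}

lemma eq_sum (β : EuclideanSpace ℝ ι) :
    sparseObjective lam v β = ∑ j, (β j * v j - lam * |β j|) := by
  simp only [sparseObjective, PiLp.inner_apply, RCLike.inner_apply', conj_trivial,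
    Finset.sum_sub_distrib, Finset.mul_sum]

lemma smul_of_nonneg {c : ℝ} (hc : 0 ≤ c) (β : EuclideanSpace ℝ ι) :
    sparseObjective lam v (c • β) = c * sparseObjective lam v β := by
  simp only [eq_sum, PiLp.smul_apply, smul_eq_mul, abs_mul, abs_of_nonneg hc, Finset.mul_sum]
  congr 1; ext; ring

lemma le_norm_mul_norm (hlam : 0 ≤ lam) (hw : ∀ j, w j = softThresh lam (v j))
    (β : EuclideanSpace ℝ ι) : sparseObjective lam v β ≤ ‖β‖ * ‖w‖ :=
  calc sparseObjective lam v β ≤ ∑ j, |β j| * |w j| := by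
        rw [eq_sum]
        gcongr with j
        rw [hw j]
        exact mul_sub_mul_abs_le_abs_mul_abs_softThresh hlam _ _
    _ ≤ ‖β‖ * ‖w‖ := EuclideanSpace.sum_abs_mul_abs_le_norm_mul_norm β w

lemma self_eq_norm_sq (hlam : 0 ≤ lam) (hw : ∀ j, w j = softThresh lam (v j)) :
    sparseObjective lam v w = ‖w‖ ^ 2 := by
  simp only [eq_sum, hw, softThresh_mul_self_sub hlam, EuclideanSpace.real_norm_sq_eq]

end sparseObjective

theorem stmt7 {p : ℕ} (v : EuclideanSpace ℝ (Fin p)) (lam : ℝ) (hlam : 0 ≤ lam)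
    (w : EuclideanSpace ℝ (Fin p)) (hw : ∀ j, w j = softThresh lam (v j)) (hw0 : w ≠ 0) :
    IsGreatest {y : ℝ | ∃ β : EuclideanSpace ℝ (Fin p),
      ‖β‖ = 1 ∧ y = ⟪β, v⟫ - lam * ∑ j, |β j|} ‖w‖ := by
  refine ⟨⟨‖w‖⁻¹ • w, norm_smul_inv_norm hw0, ?_⟩, ?_⟩
  · change ‖w‖ = sparseObjective lam v (‖w‖⁻¹ • w)
    rw [sparseObjective.smul_of_nonneg (inv_nonneg.2 (norm_nonneg w)),
      sparseObjective.self_eq_norm_sq hlam hw]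
    field_simp
  · rintro y ⟨β, hβ, rfl⟩
    exact (sparseObjective.le_norm_mul_norm hlam hw β).trans_eq (by rw [hβ, one_mul])
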